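/- arXiv:1510.02484 — 2 statements merged into one kernel-verified Lean document; each statement's English description precedes it below -/
import Mathlib

section
/- For a vertex v of the representative tree of a plane 3-tree, define W(v) = ∏_{i=1}^{3} (W(v_i) + w(v)^{1/3}), where v_1, v_2, v_3 are the children of v (with W of an empty child taken to be 0) and w assigns positive real weights with w(v) ≥ 1. Then for every v, W(v) is at least the sum of the weights w(u) over all descendants u of v (including v). -/
/-- Rooted ordered trees in which every node has at most three children (absent
children are represented by `empty`), each node carrying a real weight. -/
inductive TernTree : Type
  | empty : TernTree
  | node (w : ℝ) (c₁ c₂ c₃ : TernTree) : TernTree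

/-- The quantity `W(v) = ∏ᵢ (W(vᵢ) + w(v)^{1/3})`, with `W` of an absent child
taken to be `0`. -/
noncomputable def TernTree.W : TernTree → ℝ
  | .empty => 0
  | .node w c₁ c₂ c₃ =>
      (c₁.W + w ^ ((1 : ℝ) / 3)) * (c₂.W + w ^ ((1 : ℝ) / 3)) * (c₃.W + w ^ ((1 : ℝ) / 3))

/-- The sum of the weights over all nodes of the tree. -/
def TernTree.sumWeights : TernTree → ℝ
  | .empty => 0
  | .node w c₁ c₂ c₃ => w + c₁.sumWeights + c₂.sumWeights + c₃.sumWeights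

/-- All weights in the tree are at least `1`. -/
def TernTree.AllGE1 : TernTree → Prop
  | .empty => True
  | .node w c₁ c₂ c₃ => 1 ≤ w ∧ c₁.AllGE1 ∧ c₂.AllGE1 ∧ c₃.AllGE1

lemma TernTree.sumWeights_nonneg (t : TernTree) (h : t.AllGE1) :
    0 ≤ t.sumWeights := by
  induction t with
  | empty => simp [TernTree.sumWeights]
  | node w c₁ c₂ c₃ ih₁ ih₂ ih₃ =>
    obtain ⟨hw, h1, h2, h3⟩ := h
    have := ih₁ h1; have := ih₂ h2; have := ih₃ h3
    simp only [TernTree.sumWeights]; linarith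

/-- If every node of a (ternary) tree has weight `w(v) ≥ 1`, then
for every node `v` the value `W(v)` is at least the sum of the weights over all
descendants of `v` (including `v` itself).  Formulated for all such trees, this in
particular applies to every subtree rooted at a node `v`. -/
theorem W_ge_sum_of_weights (t : TernTree) (h : t.AllGE1) :
    t.sumWeights ≤ t.W := by
  induction t with
  | empty => simp [TernTree.sumWeights, TernTree.W]
  | node w c₁ c₂ c₃ ih₁ ih₂ ih₃ =>
    obtain ⟨hw, h1, h2, h3⟩ := h
    have s1 := c₁.sumWeights_nonneg h1
    have s2 := c₂.sumWeights_nonneg h2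
    have s3 := c₃.sumWeights_nonneg h3
    have i1 := ih₁ h1; have i2 := ih₂ h2; have i3 := ih₃ h3
    have hw0 : (0:ℝ) < w := by linarith
    set a := w ^ ((1:ℝ)/3) with ha
    have ha1 : 1 ≤ a := Real.one_le_rpow hw (by norm_num)
    have ha3 : a ^ 3 = w := by
      rw [ha, ← Real.rpow_natCast (w ^ ((1:ℝ)/3)) 3, ← Real.rpow_mul hw0.le]
      norm_num
    have ha0 : 0 ≤ a := by linarith
    have w1 : 0 ≤ c₁.W := le_trans s1 i1
    have w2 : 0 ≤ c₂.W := le_trans s2 i2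
    have w3 : 0 ≤ c₃.W := le_trans s3 i3
    have hsq : 1 ≤ a ^ 2 := one_le_pow₀ ha1
    have k1 : c₁.sumWeights ≤ a ^ 2 * c₁.W := by nlinarith
    have k2 : c₂.sumWeights ≤ a ^ 2 * c₂.W := by nlinarith
    have k3 : c₃.sumWeights ≤ a ^ 2 * c₃.W := by nlinarith
    simp only [TernTree.sumWeights, TernTree.W, ← ha]
    nlinarith [mul_nonneg (mul_nonneg ha0 w1) w2, mul_nonneg (mul_nonneg ha0 w2) w3,
      mul_nonneg (mul_nonneg ha0 w1) w3, mul_nonneg (mul_nonneg w1 w2) w3]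
end

section
/- Every maximal outerplanar graph O with vertices 1,…,n in clockwise order around the outer cycle and positive weight function w admits a proportional rectangle-contact representation in the plane in which the rectangle for each vertex v has area w(v), the rectangle R₁ for vertex 1 is leftmost, the rectangle R_n for vertex n is bottommost among the others, and the top-right corner of every rectangle lies on the outer boundary of the representation un-shared with any other rectangle (is exposed). -/
/-- Maximal outerplanar graph on `Fin n` with outer (Hamiltonian) cycle `0,1,...,n-1`:
it contains all cycle edges, its chords are pairwise non-crossing, and it has the
maximal number `2n-3` of edges. -/
def MaxOuterplanar (n : ℕ) (G : SimpleGraph (Fin n)) : Prop :=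
  (∀ i : Fin n, ∀ _ : 1 < n, G.Adj i ⟨((i : ℕ) + 1) % n, Nat.mod_lt _ (by omega)⟩) ∧
  (∀ a b c d : Fin n, G.Adj a b → G.Adj c d → ¬(a < c ∧ c < b ∧ b < d)) ∧
  G.edgeSet.ncard = 2 * n - 3


/-- An axis-aligned rectangle in the plane. -/
structure Rect where
  xlo : ℝ
  xhi : ℝ
  ylo : ℝ
  yhi : ℝ
  hx : xlo < xhi
  hy : ylo < yhi

def Rect.toSet (R : Rect) : Set (ℝ × ℝ) :=
  {p | R.xlo ≤ p.1 ∧ p.1 ≤ R.xhi ∧ R.ylo ≤ p.2 ∧ p.2 ≤ R.yhi}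

def Rect.interior (R : Rect) : Set (ℝ × ℝ) :=
  {p | R.xlo < p.1 ∧ p.1 < R.xhi ∧ R.ylo < p.2 ∧ p.2 < R.yhi}

def Rect.area (R : Rect) : ℝ := (R.xhi - R.xlo) * (R.yhi - R.ylo)

def Rect.IsSquare (R : Rect) : Prop := R.xhi - R.xlo = R.yhi - R.ylo

/-- Two rectangles share a boundary segment of positive length. -/
def Rect.Contact (R S : Rect) : Prop :=
  ((R.xhi = S.xlo ∨ S.xhi = R.xlo) ∧ max R.ylo S.ylo < min R.yhi S.yhi) ∨
  ((R.yhi = S.ylo ∨ S.yhi = R.ylo) ∧ max R.xlo S.xlo < min R.xhi S.xhi)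

/-!
An edge `ij` (`i < j`) of a maximal outerplanar graph with vertices strictly between its ends has a
common neighbour `k` with `i < k < j`: the edges, read as intervals of `[0, n - 1]`, form a
non-crossing family of the maximum size `2n - 3`, hence a triangulation.

The vertices strictly between `i` and `j` are then laid out as a staircase inside a box of any
width and any large enough height, with the neighbours of `i` touching its left side and those
of `j` its bottom side: `k` takes a rectangle in the bottom-left corner, the staircase of `ik`
sits on top of it and the staircase of `kj` to its right. Each staircase stays strictly inside
its box, which keeps every top-right corner exposed. Finally the staircase of the outer edge
`0 (n - 1)` is framed by a tall rectangle for `0` on its left and a flat one for `n - 1` below.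
-/

namespace Intervals

def Cross (p q : ℕ × ℕ) : Prop := p.1 < q.1 ∧ q.1 < p.2 ∧ p.2 < q.2

def Noncrossing (F : Finset (ℕ × ℕ)) : Prop := ∀ p ∈ F, ∀ q ∈ F, ¬ Cross p q

def Within (F : Finset (ℕ × ℕ)) (l r : ℕ) : Prop := ∀ p ∈ F, l ≤ p.1 ∧ p.1 < p.2 ∧ p.2 ≤ r

variable {F : Finset (ℕ × ℕ)} {l r : ℕ}

theorem Noncrossing.mono {F' : Finset (ℕ × ℕ)} (hF : Noncrossing F) (h : F' ⊆ F) :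
    Noncrossing F' :=
  fun p hp q hq => hF p (h hp) q (h hq)

theorem Within.filter (hF : Within F l r) {l' r' : ℕ} (P : ℕ × ℕ → Prop) [DecidablePred P]
    (h : ∀ p ∈ F, P p → l' ≤ p.1 ∧ p.2 ≤ r') : Within (F.filter P) l' r' := by
  intro p hp
  rw [Finset.mem_filter] at hp
  have := hF p hp.1
  have := h p hp.1 hp.2
  omega

theorem noncrossing_insert (hF : Noncrossing F) {q : ℕ × ℕ}
    (hq : ∀ p ∈ F, ¬ Cross q p ∧ ¬ Cross p q) : Noncrossing (insert q F) := by
  have hqq : ¬ Cross q q := fun h => lt_irrefl _ h.1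
  simp only [Noncrossing, Finset.mem_insert, forall_eq_or_imp]
  exact ⟨⟨hqq, fun p hp => (hq p hp).1⟩, fun p hp => ⟨(hq p hp).2, hF p hp⟩⟩

theorem Noncrossing.exists_split_point (hF : Noncrossing F) (hW : Within F l r)
    (hgap : l + 1 < r) : ∃ s, l < s ∧ s < r ∧ ∀ p ∈ F, p ≠ (l, r) → p.2 ≤ s ∨ s ≤ p.1 := by
  classical
  have hP : ∃ a, l < a ∧ ((a, r) ∈ F ∨ a = r - 1) := ⟨r - 1, by omega, Or.inr rfl⟩
  obtain ⟨hls, hs⟩ := Nat.find_spec hP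
  have hsr : Nat.find hP < r := by
    have := Nat.find_min' hP ⟨by omega, Or.inr rfl⟩
    omega
  refine ⟨Nat.find hP, hls, hsr, fun p hp hpne => ?_⟩
  obtain ⟨hlp, -, hpr⟩ := hW p hp
  by_contra! hcross
  rcases Nat.lt_or_ge p.2 r with hpr' | hpr'
  · rcases hs with hs | hs
    · exact hF p hp _ hs ⟨hcross.2, hcross.1, hpr'⟩
    · omega
  · have hp1 : l < p.1 := by
      by_contra
      exact hpne (Prod.ext (by omega) (by omega))
    have := Nat.find_min' hP ⟨hp1, Or.inl (by rwa [show r = p.2 by omega])⟩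
    omega

theorem Noncrossing.card_add_one_le (hF : Noncrossing F) (hW : Within F l r) (hlr : l < r) :
    F.card + 1 ≤ 2 * (r - l) := by
  classical
  induction hd : r - l using Nat.strong_induction_on generalizing F l r with
  | _ d ih =>
  subst hd
  rcases Nat.lt_or_ge (l + 1) r with hgap | hgap
  swap
  · have hsub : F ⊆ {(l, r)} := fun p hp => by
      have := hW p hp
      rw [Finset.mem_singleton, Prod.ext_iff]
      omega
    have := Finset.card_le_card hsub
    rw [Finset.card_singleton] at this
    omega
  obtain ⟨s, hls, hsr, hsplit⟩ := hF.exists_split_point hW hgap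
  set F₁ := F.filter (·.2 ≤ s)
  set F₂ := F.filter (s ≤ ·.1)
  have hsub : F ⊆ insert (l, r) (F₁ ∪ F₂) := fun p hp => by
    by_cases hpne : p = (l, r)
    · exact hpne ▸ Finset.mem_insert_self _ _
    · refine Finset.mem_insert_of_mem ?_
      rcases hsplit p hp hpne with h | h
      · exact Finset.mem_union_left _ (Finset.mem_filter.2 ⟨hp, h⟩)
      · exact Finset.mem_union_right _ (Finset.mem_filter.2 ⟨hp, h⟩)
  have h₁ : F₁.card + 1 ≤ 2 * (s - l) := ih (s - l) (by omega) (hF.mono (Finset.filter_subset _ _))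
    (hW.filter _ fun p hp h => ⟨(hW p hp).1, h⟩) hls rfl
  have h₂ : F₂.card + 1 ≤ 2 * (r - s) := ih (r - s) (by omega) (hF.mono (Finset.filter_subset _ _))
    (hW.filter _ fun p hp h => ⟨h, (hW p hp).2.2⟩) hsr rfl
  calc F.card + 1 ≤ (insert (l, r) (F₁ ∪ F₂)).card + 1 := by gcongr
    _ ≤ F₁.card + F₂.card + 2 := by
      have := Finset.card_insert_le (l, r) (F₁ ∪ F₂)
      have := Finset.card_union_le F₁ F₂
      omega
    _ ≤ 2 * (r - l) := by omega

theorem Noncrossing.mem_of_card_eq (hF : Noncrossing F) (hW : Within F l r)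
    (hcard : F.card + 1 = 2 * (r - l)) {q : ℕ × ℕ} (hq : l ≤ q.1 ∧ q.1 < q.2 ∧ q.2 ≤ r)
    (hins : ∀ p ∈ F, ¬ Cross q p ∧ ¬ Cross p q) : q ∈ F := by
  by_contra hqF
  have hWq : Within (insert q F) l r := by
    simp only [Within, Finset.mem_insert, forall_eq_or_imp]
    exact ⟨hq, hW⟩
  have := (noncrossing_insert hF hins).card_add_one_le hWq (by omega)
  rw [Finset.card_insert_of_notMem hqF] at this
  omega

theorem Noncrossing.exists_split (hF : Noncrossing F) (hW : Within F l r)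
    (hcard : F.card + 1 = 2 * (r - l)) {a b : ℕ} (hab : (a, b) ∈ F) (hgap : a + 1 < b) :
    ∃ k, a < k ∧ k < b ∧ (a, k) ∈ F ∧ (k, b) ∈ F := by
  have hunit : ∀ m, l ≤ m → m < r → (m, m + 1) ∈ F := fun m hlm hmr =>
    hF.mem_of_card_eq hW hcard ⟨hlm, by omega, by omega⟩ fun p _ =>
      ⟨fun h => by simp only [Cross] at h; omega, fun h => by simp only [Cross] at h; omega⟩
  obtain ⟨hla, -, hbr⟩ := hW _ hab
  -- For the farthest `c < b` with `(a, c) ∈ F`, the interval `(c, b)` crosses nothing.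
  set c := Nat.findGreatest (fun k => (a, k) ∈ F) (b - 1)
  have hac : (a, c) ∈ F :=
    Nat.findGreatest_spec (P := fun k => (a, k) ∈ F) (show a + 1 ≤ b - 1 by omega)
      (hunit a hla (by omega))
  have hac' : a < c := (hW _ hac).2.1
  have hcb : c < b := by
    have := Nat.findGreatest_le (P := fun k => (a, k) ∈ F) (b - 1)
    omega
  refine ⟨c, hac', hcb, hac, hF.mem_of_card_eq hW hcard ⟨by omega, hcb, hbr⟩ fun q hq => ⟨?_, ?_⟩⟩
  · rintro ⟨h₁, h₂, h₃⟩
    exact hF _ hab q hq ⟨by simp only at h₁ ⊢; omega, h₂, h₃⟩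
  · rintro ⟨h₁, h₂, h₃⟩
    simp only at h₁ h₂ h₃
    rcases lt_trichotomy q.1 a with h | h | h
    · exact hF q hq _ hab ⟨h, by simp only; omega, h₃⟩
    · have : q.2 ≤ c := Nat.le_findGreatest (by omega) (by rwa [← h])
      omega
    · exact hF _ hac q hq ⟨h, h₁, h₂⟩

end Intervals

namespace MaxOuterplanar

variable {n : ℕ} {G : SimpleGraph (Fin n)}

theorem not_adj_of_lt (hG : MaxOuterplanar n G) {a b c d : Fin n} (hab : G.Adj a b)
    (hac : a < c) (hcb : c < b) (hbd : b < d) : ¬ G.Adj c d :=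
  fun hcd => hG.2.1 a b c d hab hcd ⟨hac, hcb, hbd⟩

theorem adj_zero_last (hG : MaxOuterplanar n G) (hn : 2 ≤ n) :
    G.Adj ⟨0, by omega⟩ ⟨n - 1, by omega⟩ := by
  have h := hG.1 ⟨n - 1, by omega⟩ (by omega)
  convert h.symm using 1
  exact Fin.ext (by simp [Nat.sub_add_cancel (show 1 ≤ n by omega)])

theorem exists_maximum_noncrossing_intervals (hG : MaxOuterplanar n G) (hn : 2 ≤ n) :
    ∃ F : Finset (ℕ × ℕ), Intervals.Noncrossing F ∧ Intervals.Within F 0 (n - 1) ∧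
      F.card + 1 = 2 * (n - 1 - 0) ∧
      ∀ u v : Fin n, u < v → (((u : ℕ), (v : ℕ)) ∈ F ↔ G.Adj u v) := by
  classical
  set F := G.edgeFinset.image fun e : Sym2 (Fin n) => ((e.inf : ℕ), (e.sup : ℕ))
  have hmem : ∀ p ∈ F, ∃ u v : Fin n, u < v ∧ G.Adj u v ∧ ((u : ℕ), (v : ℕ)) = p := by
    simp only [F, Finset.mem_image, SimpleGraph.mem_edgeFinset]
    rintro p ⟨e, he, rfl⟩
    induction e using Sym2.ind with | _ u v =>
    rcases lt_or_gt_of_ne (G.ne_of_adj he) with h | h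
    · exact ⟨u, v, h, he, by simp [h.le]⟩
    · exact ⟨v, u, h, he.symm, by simp [h.le]⟩
  have hinj : Set.InjOn (fun e : Sym2 (Fin n) => ((e.inf : ℕ), (e.sup : ℕ))) G.edgeFinset :=
    fun e _ e' _ h => Sym2.inf_eq_inf_and_sup_eq_sup.1
      ⟨Fin.ext (Prod.ext_iff.1 h).1, Fin.ext (Prod.ext_iff.1 h).2⟩
  have hE : G.edgeFinset.card = 2 * n - 3 := by
    rw [← hG.2.2, SimpleGraph.edgeFinset, Set.ncard_eq_toFinset_card']
  refine ⟨F, ?_, ?_, ?_, fun u v huv => ⟨fun h => ?_, fun h => ?_⟩⟩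
  · intro p hp q hq hcross
    obtain ⟨a, b, -, hab, rfl⟩ := hmem p hp
    obtain ⟨c, d, -, hcd, rfl⟩ := hmem q hq
    exact hG.2.1 a b c d hab hcd hcross
  · intro p hp
    obtain ⟨a, b, hab, -, rfl⟩ := hmem p hp
    exact ⟨Nat.zero_le _, hab, by omega⟩
  · rw [Finset.card_image_of_injOn hinj, hE]
    omega
  · obtain ⟨a, b, -, hab, he⟩ := hmem _ h
    simp only [Prod.mk.injEq] at he
    rwa [← Fin.ext he.1, ← Fin.ext he.2]
  · exact Finset.mem_image.2 ⟨s(u, v), G.mem_edgeFinset.2 h, by simp [huv.le]⟩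

theorem exists_common_neighbor (hG : MaxOuterplanar n G) {i j : Fin n} (hij : G.Adj i j)
    (hgap : (i : ℕ) + 1 < j) : ∃ k, i < k ∧ k < j ∧ G.Adj i k ∧ G.Adj k j := by
  obtain ⟨F, hnc, hW, hcard, hmem⟩ := hG.exists_maximum_noncrossing_intervals (by omega)
  obtain ⟨k, hik, hkj, hik', hkj'⟩ :=
    hnc.exists_split hW hcard ((hmem i j (Fin.lt_def.2 (by omega))).2 hij) hgap
  have hk : k < n := hkj.trans j.2
  exact ⟨⟨k, hk⟩, Fin.lt_def.2 hik, Fin.lt_def.2 hkj, (hmem i ⟨k, hk⟩ (Fin.lt_def.2 hik)).1 hik',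
    (hmem ⟨k, hk⟩ j (Fin.lt_def.2 hkj)).1 hkj'⟩

end MaxOuterplanar

namespace Rect

def Apart (R S : Rect) : Prop :=
  Disjoint R.interior S.interior ∧ (R.xhi, R.yhi) ∉ S.toSet ∧ (S.xhi, S.yhi) ∉ R.toSet

variable {R S : Rect}

theorem Apart.symm (h : R.Apart S) : S.Apart R := ⟨h.1.symm, h.2.2, h.2.1⟩

theorem contact_comm : R.Contact S ↔ S.Contact R := by
  simp only [Contact, max_comm R.ylo, min_comm R.yhi, max_comm R.xlo, min_comm R.xhi,
    or_comm (a := R.xhi = S.xlo), or_comm (a := R.yhi = S.ylo)]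

theorem disjoint_interior_of_xhi_le (h : R.xhi ≤ S.xlo) : Disjoint R.interior S.interior :=
  Set.disjoint_left.2 fun _ hR hS => by linarith [hR.2.1, hS.1]

theorem disjoint_interior_of_yhi_le (h : R.yhi ≤ S.ylo) : Disjoint R.interior S.interior :=
  Set.disjoint_left.2 fun _ hR hS => by linarith [hR.2.2.2, hS.2.2.1]

theorem apart_of_xhi_le (h₁ : R.xhi ≤ S.xlo) (h₂ : S.yhi < R.yhi) : R.Apart S :=
  ⟨disjoint_interior_of_xhi_le h₁, fun h => h₂.not_ge h.2.2.2,
    fun h => (h₁.trans_lt S.hx).not_ge h.2.1⟩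

theorem apart_of_yhi_le (h₁ : R.yhi ≤ S.ylo) (h₂ : S.xhi < R.xhi) : R.Apart S :=
  ⟨disjoint_interior_of_yhi_le h₁, fun h => h₂.not_ge h.2.1,
    fun h => (h₁.trans_lt S.hy).not_ge h.2.2.2⟩

theorem apart_of_xhi_lt_of_yhi_lt (h₁ : R.xhi < S.xlo) (h₂ : S.yhi < R.ylo) : R.Apart S :=
  ⟨disjoint_interior_of_xhi_le h₁.le, fun h => h₁.not_ge h.1, fun h => h₂.not_ge h.2.2.1⟩

theorem contact_iff_of_xhi_le (h₁ : R.xhi ≤ S.xlo) (h₂ : R.ylo ≤ S.ylo) (h₃ : S.yhi < R.yhi) :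
    R.Contact S ↔ S.xlo = R.xhi := by
  refine ⟨?_, fun h => Or.inl ⟨Or.inl h.symm, ?_⟩⟩
  · rintro (⟨h | h, -⟩ | ⟨h | h, -⟩) <;> linarith [R.hx, R.hy, S.hx, S.hy]
  · rw [max_lt_iff, lt_min_iff, lt_min_iff]
    refine ⟨⟨?_, ?_⟩, ?_, ?_⟩ <;> linarith [R.hy, S.hy]

theorem contact_iff_of_yhi_le (h₁ : R.yhi ≤ S.ylo) (h₂ : R.xlo ≤ S.xlo) (h₃ : S.xhi < R.xhi) :
    R.Contact S ↔ S.ylo = R.yhi := by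
  refine ⟨?_, fun h => Or.inr ⟨Or.inl h.symm, ?_⟩⟩
  · rintro (⟨h | h, -⟩ | ⟨h | h, -⟩) <;> linarith [R.hx, R.hy, S.hx, S.hy]
  · rw [max_lt_iff, lt_min_iff, lt_min_iff]
    refine ⟨⟨?_, ?_⟩, ?_, ?_⟩ <;> linarith [R.hx, S.hx]

theorem not_contact_of_xhi_lt_of_yhi_lt (h₁ : R.xhi < S.xlo) (h₂ : S.yhi < R.ylo) :
    ¬ R.Contact S := by
  rintro (⟨h | h, -⟩ | ⟨h | h, -⟩) <;> linarith [R.hx, R.hy, S.hx, S.hy]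

end Rect

open Set

section Layout

variable {V : Type*} (G : SimpleGraph V) (w : V → ℝ)

def IsContactPair (ρ : V → Rect) (u v : V) : Prop :=
  (ρ u).Apart (ρ v) ∧ (G.Adj u v ↔ (ρ u).Contact (ρ v))

structure IsLayout (S : Set V) (ρ : V → Rect) : Prop where
  area_eq : ∀ v ∈ S, (ρ v).area = w v
  pairwise : S.Pairwise (IsContactPair G ρ)

variable {G w} {S T : Set V} {ρ ρ' : V → Rect}

theorem IsContactPair.symm {u v : V} (h : IsContactPair G ρ u v) : IsContactPair G ρ v u :=
  ⟨h.1.symm, by rw [G.adj_comm, Rect.contact_comm]; exact h.2⟩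

theorem IsLayout.congr (h : IsLayout G w S ρ) (h' : EqOn ρ ρ' S) : IsLayout G w S ρ' where
  area_eq v hv := h' hv ▸ h.area_eq v hv
  pairwise u hu v hv huv := by
    simpa only [IsContactPair, h' hu, h' hv] using h.pairwise hu hv huv

theorem isLayout_singleton {v : V} (h : (ρ v).area = w v) : IsLayout G w {v} ρ :=
  ⟨by simpa using h, pairwise_singleton _ _⟩

theorem IsLayout.union (hS : IsLayout G w S ρ) (hT : IsLayout G w T ρ)
    (hST : ∀ u ∈ S, ∀ v ∈ T, u ≠ v → IsContactPair G ρ u v) : IsLayout G w (S ∪ T) ρ where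
  area_eq v hv := hv.elim (hS.area_eq v) (hT.area_eq v)
  pairwise := pairwise_union.2 ⟨hS.pairwise, hT.pairwise, fun u hu v hv huv =>
    ⟨hST u hu v hv huv, (hST u hu v hv huv).symm⟩⟩

end Layout

section Staircase

variable {V : Type*} [PartialOrder V] (G : SimpleGraph V) (w : V → ℝ)

structure IsStaircase (i j : V) (a b W H : ℝ) (ρ : V → Rect) : Prop where
  layout : IsLayout G w (Ioo i j) ρ
  le_xlo : ∀ v ∈ Ioo i j, a ≤ (ρ v).xlo
  xhi_lt : ∀ v ∈ Ioo i j, (ρ v).xhi < a + W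
  le_ylo : ∀ v ∈ Ioo i j, b ≤ (ρ v).ylo
  yhi_lt : ∀ v ∈ Ioo i j, (ρ v).yhi < b + H
  adj_left_iff : ∀ v ∈ Ioo i j, G.Adj i v ↔ (ρ v).xlo = a
  adj_right_iff : ∀ v ∈ Ioo i j, G.Adj v j ↔ (ρ v).ylo = b

variable {G w} {i j : V} {a b W H : ℝ} {ρ ρ' : V → Rect}

theorem isStaircase_of_Ioo_eq_empty (h : Ioo i j = ∅) : IsStaircase G w i j a b W H ρ := by
  refine ⟨⟨?_, ?_⟩, ?_, ?_, ?_, ?_, ?_, ?_⟩ <;> simp [h]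

theorem IsStaircase.congr (h : IsStaircase G w i j a b W H ρ) (h' : EqOn ρ ρ' (Ioo i j)) :
    IsStaircase G w i j a b W H ρ' where
  layout := h.layout.congr h'
  le_xlo v hv := h' hv ▸ h.le_xlo v hv
  xhi_lt v hv := h' hv ▸ h.xhi_lt v hv
  le_ylo v hv := h' hv ▸ h.le_ylo v hv
  yhi_lt v hv := h' hv ▸ h.yhi_lt v hv
  adj_left_iff v hv := h' hv ▸ h.adj_left_iff v hv
  adj_right_iff v hv := h' hv ▸ h.adj_right_iff v hv

theorem IsStaircase.isContactPair_left (h : IsStaircase G w i j a b W H ρ) (hx : (ρ i).xhi = a)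
    (hy₁ : (ρ i).ylo ≤ b) (hy₂ : b + H ≤ (ρ i).yhi) {v : V} (hv : v ∈ Ioo i j) :
    IsContactPair G ρ i v := by
  have h₁ : (ρ i).xhi ≤ (ρ v).xlo := hx ▸ h.le_xlo v hv
  have h₂ : (ρ i).ylo ≤ (ρ v).ylo := hy₁.trans (h.le_ylo v hv)
  have h₃ : (ρ v).yhi < (ρ i).yhi := (h.yhi_lt v hv).trans_le hy₂
  refine ⟨Rect.apart_of_xhi_le h₁ h₃, ?_⟩
  rw [Rect.contact_iff_of_xhi_le h₁ h₂ h₃, hx]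
  exact h.adj_left_iff v hv

theorem IsStaircase.isContactPair_bottom (h : IsStaircase G w i j a b W H ρ) (hy : (ρ j).yhi = b)
    (hx₁ : (ρ j).xlo ≤ a) (hx₂ : a + W ≤ (ρ j).xhi) {v : V} (hv : v ∈ Ioo i j) :
    IsContactPair G ρ v j := by
  have h₁ : (ρ j).yhi ≤ (ρ v).ylo := hy ▸ h.le_ylo v hv
  have h₂ : (ρ j).xlo ≤ (ρ v).xlo := hx₁.trans (h.le_xlo v hv)
  have h₃ : (ρ v).xhi < (ρ j).xhi := (h.xhi_lt v hv).trans_le hx₂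
  refine IsContactPair.symm ⟨Rect.apart_of_yhi_le h₁ h₃, ?_⟩
  rw [Rect.contact_iff_of_yhi_le h₁ h₂ h₃, hy, G.adj_comm]
  exact h.adj_right_iff v hv

theorem Set.Icc_eq_insert_insert_Ioo (hij : i < j) : Icc i j = insert j (insert i (Ioo i j)) := by
  rw [Ioo_insert_left hij, Ico_insert_right hij.le]

theorem IsStaircase.isLayout_Icc (h : IsStaircase G w i j a b W H ρ) (hij : i < j)
    (hadj : G.Adj i j) (hi : (ρ i).area = w i) (hj : (ρ j).area = w j)
    (hix : (ρ i).xhi = a) (hiy : (ρ i).ylo ≤ (ρ j).ylo) (hiy' : b + H ≤ (ρ i).yhi)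
    (hjx : (ρ j).xlo = a) (hjx' : a + W ≤ (ρ j).xhi) (hjy : (ρ j).yhi = b) (hH : 0 < H) :
    IsLayout G w (Icc i j) ρ := by
  have hiy₀ : (ρ i).ylo ≤ b := by linarith [(ρ j).hy]
  have hij_pair : IsContactPair G ρ i j := by
    have h₁ : (ρ i).xhi ≤ (ρ j).xlo := by rw [hix, hjx]
    have h₃ : (ρ j).yhi < (ρ i).yhi := by linarith
    exact ⟨Rect.apart_of_xhi_le h₁ h₃,
      iff_of_true hadj ((Rect.contact_iff_of_xhi_le h₁ hiy h₃).2 (hjx.trans hix.symm))⟩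
  rw [Icc_eq_insert_insert_Ioo hij, insert_eq, insert_eq]
  refine (isLayout_singleton hj).union ((isLayout_singleton hi).union h.layout ?_) ?_
  · rintro _ rfl v hv -
    exact h.isContactPair_left hix hiy₀ hiy' hv
  · rintro _ rfl u (rfl | hu) -
    · exact hij_pair.symm
    · exact (h.isContactPair_bottom hjy hjx.le hjx' hu).symm

theorem IsStaircase.xlo_le (h : IsStaircase G w i j a b W H ρ) (hij : i < j)
    (hix : (ρ i).xhi = a) (hjx : (ρ j).xlo = a) : ∀ v ∈ Icc i j, (ρ i).xlo ≤ (ρ v).xlo := by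
  rw [Icc_eq_insert_insert_Ioo hij]
  rintro v (rfl | rfl | hv)
  · linarith [(ρ i).hx]
  · exact le_rfl
  · linarith [(ρ i).hx, h.le_xlo v hv]

theorem IsStaircase.ylo_le (h : IsStaircase G w i j a b W H ρ) (hij : i < j)
    (hjy : (ρ j).yhi = b) : ∀ v ∈ Icc i j, v ≠ i → (ρ j).ylo ≤ (ρ v).ylo := by
  rw [Icc_eq_insert_insert_Ioo hij]
  rintro v (rfl | rfl | hv) hvi
  · exact le_rfl
  · exact absurd rfl hvi
  · linarith [(ρ j).hy, h.le_ylo v hv]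

theorem IsStaircase.exists_frame [DecidableEq V] (hwi : 0 < w i) (hwj : 0 < w j) (hij : i < j)
    (hadj : G.Adj i j) (hH : 0 < H) (h : IsStaircase G w i j (w i / (w j + H)) (w j) 1 H ρ) :
    ∃ ρ', IsLayout G w (Icc i j) ρ' ∧ (∀ v ∈ Icc i j, (ρ' i).xlo ≤ (ρ' v).xlo) ∧
      ∀ v ∈ Icc i j, v ≠ i → (ρ' j).ylo ≤ (ρ' v).ylo := by
  set x := w i / (w j + H)
  have hx : 0 < x := div_pos hwi (by positivity)
  set ρ' := Function.update (Function.update ρ i ⟨0, x, 0, w j + H, hx, by positivity⟩) j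
    ⟨x, x + 1, 0, w j, by linarith, hwj⟩
  have h' : IsStaircase G w i j x (w j) 1 H ρ' :=
    h.congr fun v hv => by simp [ρ', hv.1.ne', hv.2.ne]
  have hρi : ρ' i = ⟨0, x, 0, w j + H, hx, by positivity⟩ := by simp [ρ', hij.ne]
  have hρj : ρ' j = ⟨x, x + 1, 0, w j, by linarith, hwj⟩ := by simp [ρ']
  refine ⟨ρ', h'.isLayout_Icc hij hadj ?_ ?_ ?_ ?_ ?_ ?_ ?_ ?_ hH,
    h'.xlo_le hij ?_ ?_, h'.ylo_le hij ?_⟩ <;>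
    simp [hρi, hρj, Rect.area, x, div_mul_cancel₀ _ (show w j + H ≠ 0 by positivity)]

end Staircase

section Glue

variable {n : ℕ} {G : SimpleGraph (Fin n)} {w : Fin n → ℝ}

theorem forall_mem_Ioo_of_split {V : Type*} [LinearOrder V] {i k j : V} {P : V → Prop}
    (hik : i < k) (hkj : k < j) (hL : ∀ v ∈ Ioo i k, P v) (hk : P k) (hR : ∀ v ∈ Ioo k j, P v) :
    ∀ v ∈ Ioo i j, P v := by
  rw [← Ioo_union_Ico_eq_Ioo hik hkj.le, ← Ioo_insert_left hkj]
  rintro v (hv | rfl | hv)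
  exacts [hL v hv, hk, hR v hv]

theorem IsStaircase.glue (hG : MaxOuterplanar n G) {i k j : Fin n} (hik : i < k) (hkj : k < j)
    (hAik : G.Adj i k) (hAkj : G.Adj k j) {a b s t Wr Hl W H : ℝ} (hs : 0 < s) (ht : 0 < t)
    (hk : s * t = w k) (hWr : 0 < Wr) (hW : s + Wr ≤ W) (hHl : 0 < Hl) (hH : t + Hl ≤ H)
    {ρL ρR : Fin n → Rect} (hL : IsStaircase G w i k a (b + t) s Hl ρL)
    (hR : IsStaircase G w k j (a + s) b Wr t ρR) : ∃ ρ, IsStaircase G w i j a b W H ρ := by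
  classical
  let K : Rect := ⟨a, a + s, b, b + t, by linarith, by linarith⟩
  let ρ : Fin n → Rect := fun v => if v < k then ρL v else if k < v then ρR v else K
  have hρk : ρ k = K := by simp [ρ]
  obtain ⟨hKx₁, hKx₂, hKy₁, hKy₂⟩ :
      (ρ k).xlo = a ∧ (ρ k).xhi = a + s ∧ (ρ k).ylo = b ∧ (ρ k).yhi = b + t := by
    simp [hρk, K]
  replace hL := hL.congr (ρ' := ρ) fun v hv => (if_pos hv.2).symm
  replace hR := hR.congr (ρ' := ρ) fun v hv => by simp [ρ, hv.1, hv.1.not_gt]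
  have hK : IsLayout G w {k} ρ := isLayout_singleton <| by
    rw [← hk, Rect.area, hKx₁, hKx₂, hKy₁, hKy₂]
    ring
  have hLR : ∀ u ∈ Ioo i k, ∀ v ∈ Ioo k j, IsContactPair G ρ u v := fun u hu v hv => by
    have h₁ : (ρ u).xhi < (ρ v).xlo := by linarith [hL.xhi_lt u hu, hR.le_xlo v hv]
    have h₂ : (ρ v).yhi < (ρ u).ylo := by linarith [hL.le_ylo u hu, hR.yhi_lt v hv]
    exact ⟨Rect.apart_of_xhi_lt_of_yhi_lt h₁ h₂,
      iff_of_false (hG.not_adj_of_lt hAik hu.1 hu.2 hv.1)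
        (Rect.not_contact_of_xhi_lt_of_yhi_lt h₁ h₂)⟩
  have hlayout : IsLayout G w (Ioo i k ∪ ({k} ∪ Ioo k j)) ρ := by
    refine hL.layout.union (hK.union hR.layout ?_) ?_
    · rintro _ rfl v hv -
      exact hR.isContactPair_left hKx₂ hKy₁.le hKy₂.ge hv
    · rintro u hu v (rfl | hv) -
      · exact hL.isContactPair_bottom hKy₂ hKx₁.le hKx₂.ge hu
      · exact hLR u hu v hv
  refine ⟨ρ, ⟨?_, ?_, ?_, ?_, ?_, ?_, ?_⟩⟩
  · rwa [← Ioo_union_Ico_eq_Ioo hik hkj.le, ← Ioo_insert_left hkj, insert_eq]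
  · exact forall_mem_Ioo_of_split hik hkj hL.le_xlo hKx₁.ge
      fun v hv => by linarith [hR.le_xlo v hv]
  · exact forall_mem_Ioo_of_split hik hkj (fun v hv => by linarith [hL.xhi_lt v hv])
      (by linarith) fun v hv => by linarith [hR.xhi_lt v hv]
  · exact forall_mem_Ioo_of_split hik hkj (fun v hv => by linarith [hL.le_ylo v hv])
      hKy₁.ge hR.le_ylo
  · exact forall_mem_Ioo_of_split hik hkj (fun v hv => by linarith [hL.yhi_lt v hv])
      (by linarith) fun v hv => by linarith [hR.yhi_lt v hv]
  · refine forall_mem_Ioo_of_split hik hkj hL.adj_left_iff (iff_of_true hAik hKx₁) fun v hv => ?_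
    exact iff_of_false (fun hAiv => hG.not_adj_of_lt hAiv hik hv.1 hv.2 hAkj)
      (by linarith [hR.le_xlo v hv])
  · refine forall_mem_Ioo_of_split hik hkj (fun v hv => ?_) (iff_of_true hAkj hKy₁) hR.adj_right_iff
    exact iff_of_false (hG.not_adj_of_lt hAik hv.1 hv.2 hkj) (by linarith [hL.le_ylo v hv])

end Glue

theorem MaxOuterplanar.exists_staircase {n : ℕ} {G : SimpleGraph (Fin n)} {w : Fin n → ℝ}
    (hG : MaxOuterplanar n G) (hw : ∀ v, 0 < w v) {i j : Fin n} (hij : G.Adj i j) {W : ℝ}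
    (hW : 0 < W) : ∃ H₀ > 0, ∀ H ≥ H₀, ∀ a b, ∃ ρ, IsStaircase G w i j a b W H ρ := by
  by_cases hgap : (i : ℕ) + 1 < j
  · obtain ⟨k, hik, hkj, hAik, hAkj⟩ := hG.exists_common_neighbor hij hgap
    obtain ⟨Hr, hHr, hR⟩ := hG.exists_staircase hw hAkj (half_pos hW)
    -- `k` gets a `s × t` rectangle tall enough for the right staircase and at most `W / 2` wide.
    set t := max Hr (2 * w k / W)
    have ht : 0 < t := hHr.trans_le (le_max_left _ _)
    set s := w k / t
    have hs : 0 < s := div_pos (hw k) ht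
    have hsW : s ≤ W / 2 := by
      have := le_max_right Hr (2 * w k / W)
      rw [div_le_iff₀ hW] at this
      rw [div_le_iff₀ ht]
      linarith
    obtain ⟨Hl, hHl, hL⟩ := hG.exists_staircase hw hAik hs
    refine ⟨t + Hl, by positivity, fun H hH a b => ?_⟩
    obtain ⟨ρL, hρL⟩ := hL (H - t) (by linarith) a (b + t)
    obtain ⟨ρR, hρR⟩ := hR t (le_max_left _ _) (a + s) b
    exact hρL.glue hG hik hkj hAik hAkj hs ht (div_mul_cancel₀ _ ht.ne') (half_pos hW)
      (by linarith) (by linarith) (by linarith) hρR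
  · refine ⟨1, one_pos, fun _ _ _ _ => ⟨fun _ => ⟨0, 1, 0, 1, one_pos, one_pos⟩, ?_⟩⟩
    refine isStaircase_of_Ioo_eq_empty (eq_empty_of_forall_notMem fun v hv => hgap ?_)
    have := Fin.lt_def.1 hv.1
    have := Fin.lt_def.1 hv.2
    omega
termination_by (j : ℕ) - i
decreasing_by
  all_goals
    have := Fin.lt_def.1 hik
    have := Fin.lt_def.1 hkj
    omega

/-- Every maximal outerplanar graph with outer cycle `0,…,n-1`
(clockwise) and positive weights admits a proportional rectangle-contact
representation in which the rectangle of each vertex `v` has area `w v`, the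
rectangle of vertex `0` is leftmost, the rectangle of vertex `n-1` is bottommost
among the remaining ones, and the top-right corner of every rectangle is exposed
(it belongs to no other rectangle). -/
theorem staircase_layout_exists
    {n : ℕ} (hn : 3 ≤ n) (G : SimpleGraph (Fin n)) (hG : MaxOuterplanar n G)
    (w : Fin n → ℝ) (hw : ∀ v, 0 < w v) :
    ∃ ρ : Fin n → Rect,
      (∀ v, (ρ v).area = w v) ∧
      (∀ u v, u ≠ v → Disjoint (ρ u).interior (ρ v).interior) ∧
      (∀ u v, u ≠ v → (G.Adj u v ↔ Rect.Contact (ρ u) (ρ v))) ∧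
      (∀ v, (ρ ⟨0, by omega⟩).xlo ≤ (ρ v).xlo) ∧
      (∀ v, v ≠ ⟨0, by omega⟩ → (ρ ⟨n - 1, by omega⟩).ylo ≤ (ρ v).ylo) ∧
      (∀ v u, u ≠ v → ((ρ v).xhi, (ρ v).yhi) ∉ (ρ u).toSet) := by
  set i : Fin n := ⟨0, by omega⟩
  set j : Fin n := ⟨n - 1, by omega⟩
  have hij : i < j := Fin.lt_def.2 (by simp only [i, j]; omega)
  have hIcc : Icc i j = univ :=
    eq_univ_of_forall fun v => ⟨Fin.le_def.2 v.val.zero_le, Fin.le_def.2 (by simp only [j]; omega)⟩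
  have hadj : G.Adj i j := hG.adj_zero_last (by omega)
  obtain ⟨H, hH, hstair⟩ := hG.exists_staircase hw hadj one_pos
  obtain ⟨ρ₀, hρ₀⟩ := hstair H le_rfl (w i / (w j + H)) (w j)
  obtain ⟨ρ, hlayout, hleft, hbottom⟩ := hρ₀.exists_frame (hw i) (hw j) hij hadj hH
  rw [hIcc] at hlayout hleft hbottom
  refine ⟨ρ, fun v => hlayout.area_eq v trivial,
    fun u v huv => (hlayout.pairwise trivial trivial huv).1.1,
    fun u v huv => (hlayout.pairwise trivial trivial huv).2,
    fun v => hleft v trivial, fun v => hbottom v trivial,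
    fun v u huv => (hlayout.pairwise trivial trivial huv).1.2.2⟩
end
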